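/- arXiv:1111.6959 — 2 statements merged into one kernel-verified Lean document; each statement's English description precedes it below -/
import Mathlib

section
/- Adjointness of translation operators at the level of bilinear forms: for the operators E_{a,a+1} and E_{a+1,a} on Λ^m(V*) ⊗ Λ^n(V), and the bilinear pairing making the basis {x_λ} orthonormal, one has ⟨E_{a,a+1} x, y⟩ = ⟨x, E_{a+1,a} y⟩ for all x, y; i.e. E_{a,a+1} and E_{a+1,a} are adjoint with respect to this pairing. -/
open Classical

/-- Index set for the standard monomial basis of `Λ^m(V*) ⊗ Λ^n(V)`
(`t : ℕ` encodes the half-integer index `t + 1/2`). -/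
abbrev XIdx (m n : ℕ) := {c : Fin m → ℕ // StrictAnti c} × {d : Fin n → ℕ // StrictAnti d}

/-- The `gl_{∞/2}`-module `Λ^m(V*) ⊗ Λ^n(V)` in its standard monomial basis. -/
abbrev Xsp (m n : ℕ) := XIdx m n →₀ ℚ

/-- Replace one factor `v_{u+1/2}` by `v_{v+1/2}` in the `Λ^n(V)` part. -/
noncomputable def replD {m n : ℕ} (u v : ℕ) : Xsp m n →ₗ[ℚ] Xsp m n :=
  Finsupp.lift (Xsp m n) ℚ (XIdx m n) fun p =>
    ∑ j : Fin n, if p.2.1 j = u then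
      (if h : StrictAnti (Function.update p.2.1 j v)
        then Finsupp.single (p.1, ⟨Function.update p.2.1 j v, h⟩) (1 : ℚ) else 0)
      else 0

/-- Replace one factor `w_{u+1/2}` by `w_{v+1/2}` in the `Λ^m(V*)` part. -/
noncomputable def replC {m n : ℕ} (u v : ℕ) : Xsp m n →ₗ[ℚ] Xsp m n :=
  Finsupp.lift (Xsp m n) ℚ (XIdx m n) fun p =>
    ∑ i : Fin m, if p.1.1 i = u then
      (if h : StrictAnti (Function.update p.1.1 i v)
        then Finsupp.single (⟨Function.update p.1.1 i v, h⟩, p.2) (1 : ℚ) else 0)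
      else 0

/-- The operator `E_{a,a+1}` on `Λ^m(V*) ⊗ Λ^n(V)`, `a = t + 1/2`. -/
noncomputable def Eraise {m n : ℕ} (t : ℕ) : Xsp m n →ₗ[ℚ] Xsp m n :=
  replD (t + 1) t + replC t (t + 1)

/-- The operator `E_{a+1,a}` on `Λ^m(V*) ⊗ Λ^n(V)`, `a = t + 1/2`. -/
noncomputable def Elower {m n : ℕ} (t : ℕ) : Xsp m n →ₗ[ℚ] Xsp m n :=
  replD t (t + 1) + replC (t + 1) t

/-- The bilinear pairing on `Λ^m(V*) ⊗ Λ^n(V)` making the standard monomial basis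
`{x_λ}` orthonormal. -/
noncomputable def xPair {m n : ℕ} (x y : Xsp m n) : ℚ :=
  Finsupp.sum x fun p c => c * y p

/-! `E_{a,a+1}` and `E_{a+1,a}` are sums of operators replacing one index `u` by `v`, resp.
`v` by `u`, in one tensor factor. Changing entry `j` of a tuple from `u` to `v` and back from
`v` to `u` are mutually inverse, so these two replacement operators have transposed matrices in
the basis `{x_λ}`; since the pairing is the standard one in that basis, transposed matrices
mean adjoint operators. -/

lemma apply_eq_and_update_eq_comm {ι α : Type*} [DecidableEq ι] {c d : ι → α} {j : ι}
    {u v : α} : (c j = u ∧ Function.update c j v = d) ↔ (d j = v ∧ Function.update d j u = c) := by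
  have key : ∀ {c d : ι → α} {u v : α},
      c j = u ∧ Function.update c j v = d → d j = v ∧ Function.update d j u = c := by
    rintro c d u v ⟨rfl, rfl⟩
    simp
  exact ⟨key, key⟩

section Replacement

variable {m n : ℕ} (u v : ℕ) (p q : XIdx m n)

lemma replD_single_apply : replD u v (Finsupp.single p 1) q =
    ∑ j : Fin n, if p.1 = q.1 ∧ p.2.1 j = u ∧ Function.update p.2.1 j v = q.2.1 then 1 else 0 := by
  simp only [replD, Finsupp.lift_apply, Finsupp.sum_single_index, one_smul,
    Finsupp.finsetSum_apply, zero_smul]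
  refine Finset.sum_congr rfl fun j _ => ?_
  split_ifs <;> simp_all [Finsupp.single_apply, Prod.ext_iff, Subtype.ext_iff, q.2.2]

lemma replC_single_apply : replC u v (Finsupp.single p 1) q =
    ∑ i : Fin m, if p.2 = q.2 ∧ p.1.1 i = u ∧ Function.update p.1.1 i v = q.1.1 then 1 else 0 := by
  simp only [replC, Finsupp.lift_apply, Finsupp.sum_single_index, one_smul,
    Finsupp.finsetSum_apply, zero_smul]
  refine Finset.sum_congr rfl fun i _ => ?_
  split_ifs <;> simp_all [Finsupp.single_apply, Prod.ext_iff, Subtype.ext_iff, q.1.2, imp_not_comm]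

lemma replD_single_apply_swap :
    replD u v (Finsupp.single p 1) q = replD v u (Finsupp.single q 1) p := by
  simp only [replD_single_apply, eq_comm (a := p.1), apply_eq_and_update_eq_comm]

lemma replC_single_apply_swap :
    replC u v (Finsupp.single p 1) q = replC v u (Finsupp.single q 1) p := by
  simp only [replC_single_apply, eq_comm (a := p.2), apply_eq_and_update_eq_comm]

end Replacement

section Pairing

variable {m n : ℕ}

noncomputable def xPairBilin (m n : ℕ) : Xsp m n →ₗ[ℚ] Xsp m n →ₗ[ℚ] ℚ :=
  Finsupp.lsum ℚ fun p => LinearMap.toSpanSingleton ℚ _ (Finsupp.lapply p)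

lemma xPairBilin_apply (x y : Xsp m n) : xPairBilin m n x y = xPair x y := by
  simp [xPairBilin, xPair]

lemma xPair_single_left (p : XIdx m n) (y : Xsp m n) : xPair (Finsupp.single p 1) y = y p := by
  simp [xPair]

lemma xPair_single_right (x : Xsp m n) (q : XIdx m n) : xPair x (Finsupp.single q 1) = x q := by
  simp [xPair, Finsupp.single_apply, eq_comm]

lemma xPair_map_eq_of_single_apply {f g : Xsp m n →ₗ[ℚ] Xsp m n}
    (h : ∀ p q, f (Finsupp.single p 1) q = g (Finsupp.single q 1) p) (x y : Xsp m n) :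
    xPair (f x) y = xPair x (g y) := by
  have hB : xPairBilin m n ∘ₗ f = (xPairBilin m n).compl₂ g :=
    Finsupp.lhom_ext' fun p => LinearMap.ext_ring <| Finsupp.lhom_ext' fun q =>
      LinearMap.ext_ring <| by simp [xPairBilin_apply, xPair_single_left, xPair_single_right, h]
  simpa [xPairBilin_apply] using congr($hB x y)

end Pairing

/-- **Adjointness of the translation operators (categorified form of equation (4)).**
With respect to the pairing making the basis `{x_λ}` orthonormal, the operators
`E_{a,a+1}` and `E_{a+1,a}` on `Λ^m(V*) ⊗ Λ^n(V)` are mutually adjoint: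
`⟨E_{a,a+1} x, y⟩ = ⟨x, E_{a+1,a} y⟩` for all `x`, `y`. -/
theorem stmt17 {m n : ℕ} (t : ℕ) (x y : Xsp m n) :
    xPair (Eraise t x) y = xPair x (Elower t y) :=
  xPair_map_eq_of_single_apply (fun p q => by
    simp only [Eraise, Elower, LinearMap.add_apply, Finsupp.add_apply]
    rw [replD_single_apply_swap, replC_single_apply_swap]) x y
end

section
/- Let sw be the switch operator on the span of Euler classes: sw(E(λ)) = Σ_μ E(μ) where μ ranges over {λ} ∪ {λ ± ε_j} ∪ {λ ± δ_k} with γ(μ) = γ(λ). Using the Weyl-group symmetry E(s(λ+ρ)−ρ) = −E(λ) for a simple reflection s: if f_λ has empty tail position then sw(E(λ)) = E(λ); if f_λ has > or < at the tail position then sw(E(λ)) = 0; if f_λ has × at the tail position then sw(E(λ)) = −E(λ). -/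
/-!
A shift `λ ± ε_i` (resp. `λ ± δ_j`) keeps `γ` exactly when it keeps `|a_i|` (resp. `|b_j|`).
For a positive coordinate `x` that only happens for `x - 2 = -x`, i.e. at the tail `x = 1`, and
then the shifted weight is the reflection of `λ`, contributing `-E(λ)`. Since the coordinates
are strictly decreasing, each of the two families has at most one tail coordinate, so
`sw(E(λ)) = E(λ) - [tail among the a's] E(λ) - [tail among the b's] E(λ)`.
-/

open Classical Finset

/-- The `gl_{∞/2}`-weight `γ(λ)` (equivalently, the central character) of the weight
with doubled coordinates `λ + ρ = (a₁/2, …, a_m/2 | b₁/2, …, b_n/2)`: a formal sum of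
`γ_{|t|/2}`-s over the coordinates, `v`-coordinates counted positively and
`w`-coordinates negatively. -/
noncomputable def gamOdd {m n : ℕ} (a : Fin m → ℤ) (b : Fin n → ℤ) : ℕ →₀ ℤ :=
  (∑ j, Finsupp.single (b j).natAbs (1 : ℤ)) - ∑ i, Finsupp.single (a i).natAbs (1 : ℤ)

open Classical in
/-- The switch operator on Euler characteristics:
`sw(E(λ)) = Σ_μ E(μ)`, the sum over `μ ∈ {λ} ∪ {λ ± ε_j} ∪ {λ ± δ_k}` with
`γ(μ) = γ(λ)`.  (In doubled coordinates `±ε_j`, `±δ_k` change one coordinate by `±2`.) -/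
noncomputable def swE {m n : ℕ} {M : Type*} [AddCommGroup M]
    (E : ((Fin m → ℤ) × (Fin n → ℤ)) → M) (a : Fin m → ℤ) (b : Fin n → ℤ) : M :=
  E (a, b)
    + ∑ i, ∑ s ∈ ({2, -2} : Finset ℤ),
        (if gamOdd (Function.update a i (a i + s)) b = gamOdd a b
          then E (Function.update a i (a i + s), b) else 0)
    + ∑ j, ∑ s ∈ ({2, -2} : Finset ℤ),
        (if gamOdd a (Function.update b j (b j + s)) = gamOdd a b
          then E (a, Function.update b j (b j + s)) else 0)

lemma sum_single_natAbs_update_eq_iff {ι : Type*} [Fintype ι] [DecidableEq ι]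
    (f : ι → ℤ) (i : ι) (x : ℤ) :
    ∑ k, Finsupp.single (Function.update f i x k).natAbs (1 : ℤ)
        = ∑ k, Finsupp.single (f k).natAbs (1 : ℤ) ↔ x.natAbs = (f i).natAbs := by
  have hcomp : (fun k => Finsupp.single (Function.update f i x k).natAbs (1 : ℤ))
      = Function.update (fun k => Finsupp.single (f k).natAbs 1) i (Finsupp.single x.natAbs 1) :=
    Function.comp_update (fun y : ℤ => Finsupp.single y.natAbs (1 : ℤ)) f i x
  rw [hcomp, sum_update_of_mem (mem_univ i),
    sum_eq_add_sum_sdiff_singleton_of_mem (mem_univ i), add_left_inj]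
  exact Finsupp.single_left_inj one_ne_zero

lemma gamOdd_update_left_eq_iff {m n : ℕ} (a : Fin m → ℤ) (b : Fin n → ℤ) (i : Fin m) (x : ℤ) :
    gamOdd (Function.update a i x) b = gamOdd a b ↔ x.natAbs = (a i).natAbs := by
  rw [gamOdd, gamOdd, sub_right_inj, sum_single_natAbs_update_eq_iff]

lemma gamOdd_update_right_eq_iff {m n : ℕ} (a : Fin m → ℤ) (b : Fin n → ℤ) (j : Fin n) (x : ℤ) :
    gamOdd a (Function.update b j x) = gamOdd a b ↔ x.natAbs = (b j).natAbs := by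
  rw [gamOdd, gamOdd, sub_left_inj, sum_single_natAbs_update_eq_iff]

lemma sum_shift_two_ite_natAbs_eq {M : Type*} [AddCommMonoid M] {x : ℤ} (hx : 1 ≤ x)
    (F : ℤ → M) :
    ∑ s ∈ ({2, -2} : Finset ℤ), (if (x + s).natAbs = x.natAbs then F (x + s) else 0)
      = if x = 1 then F (-x) else 0 := by
  rw [sum_pair (by decide), if_neg (by omega), zero_add]
  by_cases hx1 : x = 1
  · rw [if_pos (by omega), if_pos hx1, show x + -2 = -x by omega]
  · rw [if_neg (by omega), if_neg hx1]

lemma swE_eq {m n : ℕ} {M : Type*} [AddCommGroup M] (E : ((Fin m → ℤ) × (Fin n → ℤ)) → M)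
    {a : Fin m → ℤ} {b : Fin n → ℤ} (ha : Function.Injective a) (hb : Function.Injective b)
    (hapos : ∀ i, 1 ≤ a i) (hbpos : ∀ j, 1 ≤ b j)
    (hreflA : ∀ i, E (Function.update a i (-(a i)), b) = - E (a, b))
    (hreflB : ∀ j, E (a, Function.update b j (-(b j))) = - E (a, b)) :
    swE E a b = E (a, b) + (if ∃ i, a i = 1 then -E (a, b) else 0)
      + (if ∃ j, b j = 1 then -E (a, b) else 0) := by
  have hA : ∀ i, ∑ s ∈ ({2, -2} : Finset ℤ),
      (if gamOdd (Function.update a i (a i + s)) b = gamOdd a b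
        then E (Function.update a i (a i + s), b) else 0) = if a i = 1 then -E (a, b) else 0 := by
    intro i
    simp_rw [gamOdd_update_left_eq_iff]
    rw [sum_shift_two_ite_natAbs_eq (hapos i) (fun y => E (Function.update a i y, b)), hreflA]
  have hB : ∀ j, ∑ s ∈ ({2, -2} : Finset ℤ),
      (if gamOdd a (Function.update b j (b j + s)) = gamOdd a b
        then E (a, Function.update b j (b j + s)) else 0) = if b j = 1 then -E (a, b) else 0 := by
    intro j
    simp_rw [gamOdd_update_right_eq_iff]
    rw [sum_shift_two_ite_natAbs_eq (hbpos j) (fun y => E (a, Function.update b j y)), hreflB]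
  rw [swE, sum_congr rfl fun i _ => hA i, sum_congr rfl fun j _ => hB j,
    sum_ite_zero _ _ (fun i _ i' _ hi hi' => ha (hi.trans hi'.symm)),
    sum_ite_zero _ _ (fun j _ j' _ hj hj' => hb (hj.trans hj'.symm))]
  simp only [mem_univ, true_and]

theorem stmt18_general {m n : ℕ} {M : Type*} [AddCommGroup M]
    (E : ((Fin m → ℤ) × (Fin n → ℤ)) → M)
    (a : Fin m → ℤ) (b : Fin n → ℤ)
    (ha : StrictAnti a) (hb : StrictAnti b)
    (hapos : ∀ i, 1 ≤ a i) (hbpos : ∀ j, 1 ≤ b j)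
    (hreflA : ∀ (a' : Fin m → ℤ) (b' : Fin n → ℤ) (i : Fin m),
      E (Function.update a' i (-(a' i)), b') = - E (a', b'))
    (hreflB : ∀ (a' : Fin m → ℤ) (b' : Fin n → ℤ) (j : Fin n),
      E (a', Function.update b' j (-(b' j))) = - E (a', b')) :
    ((∀ i, a i ≠ 1) → (∀ j, b j ≠ 1) → swE E a b = E (a, b)) ∧
    ((∃ i, a i = 1) → (∀ j, b j ≠ 1) → swE E a b = 0) ∧
    ((∀ i, a i ≠ 1) → (∃ j, b j = 1) → swE E a b = 0) ∧
    ((∃ i, a i = 1) → (∃ j, b j = 1) → swE E a b = - E (a, b)) := by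
  rw [swE_eq E ha.injective hb.injective hapos hbpos (hreflA a b) (hreflB a b)]
  refine ⟨fun hA hB => ?_, fun hA hB => ?_, fun hA hB => ?_, fun hA hB => ?_⟩
  · rw [if_neg (not_exists.mpr hA), if_neg (not_exists.mpr hB), add_zero, add_zero]
  · rw [if_pos hA, if_neg (not_exists.mpr hB), add_zero, add_neg_cancel]
  · rw [if_neg (not_exists.mpr hA), if_pos hB, add_zero, add_neg_cancel]
  · rw [if_pos hA, if_pos hB]
    abel

/-- **Lemma 5 (action of the switch functor on Euler characteristics).**
Work in an abelian group spanned by symbols `E(λ)` indexed by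
`osp(2m+1,2n)`-weights in doubled half-integer coordinates (so `λ + ρ` has odd
coordinates, and `a_i = 1` encodes a symbol at the tail position `1/2`), subject to
the Weyl-group sign relations `E(s(λ+ρ)−ρ) = −E(λ)` for the sign-change reflections.
Let `λ` be tailless dominant.  If the tail position of `f_λ` is empty then
`sw(E(λ)) = E(λ)`; if `f_λ` has `>` or `<` at the tail position then `sw(E(λ)) = 0`;
and if `f_λ` has `×` at the tail position then `sw(E(λ)) = −E(λ)`. -/
theorem stmt18 {m n : ℕ} {M : Type*} [AddCommGroup M]
    (E : ((Fin m → ℤ) × (Fin n → ℤ)) → M)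
    (a : Fin m → ℤ) (b : Fin n → ℤ)
    (ha : StrictAnti a) (hb : StrictAnti b)
    (hapos : ∀ i, 1 ≤ a i) (hbpos : ∀ j, 1 ≤ b j)
    (haodd : ∀ i, Odd (a i)) (hbodd : ∀ j, Odd (b j))
    (hreflA : ∀ (a' : Fin m → ℤ) (b' : Fin n → ℤ) (i : Fin m),
      E (Function.update a' i (-(a' i)), b') = - E (a', b'))
    (hreflB : ∀ (a' : Fin m → ℤ) (b' : Fin n → ℤ) (j : Fin n),
      E (a', Function.update b' j (-(b' j))) = - E (a', b')) :
    ((∀ i, a i ≠ 1) → (∀ j, b j ≠ 1) → swE E a b = E (a, b)) ∧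
    ((∃ i, a i = 1) → (∀ j, b j ≠ 1) → swE E a b = 0) ∧
    ((∀ i, a i ≠ 1) → (∃ j, b j = 1) → swE E a b = 0) ∧
    ((∃ i, a i = 1) → (∃ j, b j = 1) → swE E a b = - E (a, b)) :=
  stmt18_general E a b ha hb hapos hbpos hreflA hreflB
end
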